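/- Suppose A ∩ B = ∅ (equivalently P_0 = ∅ and no index has both a_i > 0 and b_i > 0) in the setting of I = (u_1, u_2, x_1^{e_1},...,x_n^{e_n}). Then the collection of M-critical vertices of the matching M forms a simplicial complex (closed under subsets), equal to the join ⟨P_1⟩^{|P_1|−2} ⋆ ⟨P_2⟩^{|P_2|−2} ⋆ ⟨{1,2}⟩, i.e., the sets T ⊆ [n+2] such that T ∩ P_1 ≠ P_1 and T ∩ P_2 ≠ P_2. Equivalently, the facets are exactly the sets [n+2]∖{a,b} with a ∈ P_1 and b ∈ P_2. -/
import Mathlib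


open Finset

def v1 {n : ℕ} : Fin 2 ⊕ Fin n := Sum.inl 0
def v2 {n : ℕ} : Fin 2 ⊕ Fin n := Sum.inl 1

/-- Generators of `I`: index `inl 0 ↦ u₁` (exponents `a`), `inl 1 ↦ u₂` (exponents `b`),
`inr i ↦ x_i^{e_i}`; monomials modeled as exponent vectors. -/
def gen {n : ℕ} (a b e : Fin n → ℕ) : Fin 2 ⊕ Fin n → Fin n → ℕ :=
  Sum.elim (fun t => if t = 0 then a else b) (fun i j => if j = i then e i else 0)

/-- The lcm label `m_T` of a subset of generators (pointwise max of exponent vectors). -/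
def mT {n : ℕ} (a b e : Fin n → ℕ) (T : Finset (Fin 2 ⊕ Fin n)) : Fin n → ℕ :=
  fun i => T.sup fun k => gen a b e k i

def P0 {n : ℕ} (a b : Fin n → ℕ) : Finset (Fin 2 ⊕ Fin n) :=
  (Finset.univ.filter fun i => a i = b i).image Sum.inr

def P1 {n : ℕ} (a b : Fin n → ℕ) : Finset (Fin 2 ⊕ Fin n) :=
  (Finset.univ.filter fun i => b i < a i).image Sum.inr

def P2 {n : ℕ} (a b : Fin n → ℕ) : Finset (Fin 2 ⊕ Fin n) :=
  (Finset.univ.filter fun i => a i < b i).image Sum.inr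

def setA {n : ℕ} (a : Fin n → ℕ) : Finset (Fin 2 ⊕ Fin n) :=
  (Finset.univ.filter fun i => 0 < a i).image Sum.inr

def setB {n : ℕ} (b : Fin n → ℕ) : Finset (Fin 2 ⊕ Fin n) :=
  (Finset.univ.filter fun i => 0 < b i).image Sum.inr

/-- The matching `M` on the Hasse diagram of `2^[n+2]`: `MM a b T T'` means `(T,T')` is an
edge of the matching, given by the four families of the paper. -/
def MM {n : ℕ} (a b : Fin n → ℕ) (T T' : Finset (Fin 2 ⊕ Fin n)) : Prop :=
  (v1 ∈ T ∧ v2 ∈ T ∧ P1 a b ⊆ T ∧ T' = T.erase v1) ∨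
  (v1 ∈ T ∧ v2 ∈ T ∧ ¬ P1 a b ⊆ T ∧ P2 a b ⊆ T ∧ T' = T.erase v2) ∨
  (v1 ∈ T ∧ v2 ∉ T ∧ setA a ⊆ T ∧ T' = T.erase v1) ∨
  (v1 ∉ T ∧ v2 ∈ T ∧ setB b ⊆ T ∧ T ≠ Finset.univ.erase v1 ∧ T' = T.erase v2)

/-- `T` is an `M`-critical vertex: it is incident to no edge of the matching. -/
def critical {n : ℕ} (a b : Fin n → ℕ) (T : Finset (Fin 2 ⊕ Fin n)) : Prop :=
  ∀ T', ¬ MM a b T T' ∧ ¬ MM a b T' T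

section Aux

variable {n : ℕ} {a b : Fin n → ℕ}

lemma inr_mem_P1 {i : Fin n} : Sum.inr i ∈ P1 a b ↔ b i < a i := by simp [P1]

lemma inr_mem_P2 {i : Fin n} : Sum.inr i ∈ P2 a b ↔ a i < b i := by simp [P2]

lemma inl_notMem_P1 {j : Fin 2} : (Sum.inl j : Fin 2 ⊕ Fin n) ∉ P1 a b := by simp [P1]

lemma inl_notMem_P2 {j : Fin 2} : (Sum.inl j : Fin 2 ⊕ Fin n) ∉ P2 a b := by simp [P2]

lemma v1_notMem_P1 : (v1 : Fin 2 ⊕ Fin n) ∉ P1 a b := inl_notMem_P1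

lemma v2_notMem_P1 : (v2 : Fin 2 ⊕ Fin n) ∉ P1 a b := inl_notMem_P1

lemma v1_notMem_P2 : (v1 : Fin 2 ⊕ Fin n) ∉ P2 a b := inl_notMem_P2

lemma v2_notMem_P2 : (v2 : Fin 2 ⊕ Fin n) ∉ P2 a b := inl_notMem_P2

lemma v1_ne_v2 : (v1 : Fin 2 ⊕ Fin n) ≠ v2 := by simp [v1, v2]

lemma P1_disj {x : Fin 2 ⊕ Fin n} (h1 : x ∈ P1 a b) (h2 : x ∈ P2 a b) : False := by
  rcases x with j | i
  · exact inl_notMem_P1 h1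
  · rw [inr_mem_P1] at h1; rw [inr_mem_P2] at h2; omega

lemma P1_subset_of_eq_erase_v1 {T : Finset (Fin 2 ⊕ Fin n)}
    (h : T = Finset.univ.erase v1) : P1 a b ⊆ T := by
  subst h
  intro z hz
  exact Finset.mem_erase.2 ⟨fun hzv => v1_notMem_P1 (hzv ▸ hz), Finset.mem_univ z⟩

lemma P1_subset_insert_v2 {T : Finset (Fin 2 ⊕ Fin n)}
    (h : P1 a b ⊆ insert v2 T) : P1 a b ⊆ T := by
  intro z hz
  rcases Finset.mem_insert.1 (h hz) with h' | h'
  · exact absurd (h' ▸ hz) v2_notMem_P1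
  · exact h'

lemma not_critical_of_P1 (hA : setA a = P1 a b) {T : Finset (Fin 2 ⊕ Fin n)}
    (h : P1 a b ⊆ T) : ¬ critical a b T := by
  intro hc
  by_cases h1 : v1 ∈ T
  · by_cases h2 : v2 ∈ T
    · exact (hc (T.erase v1)).1 (Or.inl ⟨h1, h2, h, rfl⟩)
    · exact (hc (T.erase v1)).1 (Or.inr <| Or.inr <| Or.inl ⟨h1, h2, hA ▸ h, rfl⟩)
  · by_cases h2 : v2 ∈ T
    · exact (hc (insert v1 T)).2 (Or.inl ⟨Finset.mem_insert_self _ _,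
        Finset.mem_insert_of_mem h2, h.trans (Finset.subset_insert _ _),
        (Finset.erase_insert h1).symm⟩)
    · refine (hc (insert v1 T)).2 (Or.inr <| Or.inr <| Or.inl
        ⟨Finset.mem_insert_self _ _, ?_, hA ▸ h.trans (Finset.subset_insert _ _),
        (Finset.erase_insert h1).symm⟩)
      intro hm
      rcases Finset.mem_insert.1 hm with h' | h'
      · exact v1_ne_v2 h'.symm
      · exact h2 h'

lemma not_critical_of_P2 (hB : setB b = P2 a b) {T : Finset (Fin 2 ⊕ Fin n)}
    (hP1 : ¬ P1 a b ⊆ T) (h : P2 a b ⊆ T) : ¬ critical a b T := by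
  intro hc
  by_cases h1 : v1 ∈ T
  · by_cases h2 : v2 ∈ T
    · exact (hc (T.erase v2)).1 (Or.inr <| Or.inl ⟨h1, h2, hP1, h, rfl⟩)
    · refine (hc (insert v2 T)).2 (Or.inr <| Or.inl
        ⟨Finset.mem_insert_of_mem h1, Finset.mem_insert_self _ _,
        fun hs => hP1 (P1_subset_insert_v2 hs), h.trans (Finset.subset_insert _ _),
        (Finset.erase_insert h2).symm⟩)
  · by_cases h2 : v2 ∈ T
    · by_cases hT : T = Finset.univ.erase v1
      · exact hP1 (P1_subset_of_eq_erase_v1 hT)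
      · exact (hc (T.erase v2)).1 (Or.inr <| Or.inr <| Or.inr ⟨h1, h2, hB ▸ h, hT, rfl⟩)
    · refine (hc (insert v2 T)).2 (Or.inr <| Or.inr <| Or.inr ⟨?_, Finset.mem_insert_self _ _,
        hB ▸ h.trans (Finset.subset_insert _ _), ?_, (Finset.erase_insert h2).symm⟩)
      · intro hm
        rcases Finset.mem_insert.1 hm with h' | h'
        · exact v1_ne_v2 h'
        · exact h1 h'
      · intro hT
        exact hP1 (P1_subset_insert_v2 (P1_subset_of_eq_erase_v1 hT))

lemma crit_iff (hA : setA a = P1 a b) (hB : setB b = P2 a b)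
    (T : Finset (Fin 2 ⊕ Fin n)) :
    critical a b T ↔ ¬ P1 a b ⊆ T ∧ ¬ P2 a b ⊆ T := by
  constructor
  · intro hc
    have h1 : ¬ P1 a b ⊆ T := fun h => not_critical_of_P1 hA h hc
    exact ⟨h1, fun h => not_critical_of_P2 hB h1 h hc⟩
  · rintro ⟨h1, h2⟩ T'
    constructor
    · rintro (⟨_, _, hs, _⟩ | ⟨_, _, _, hs, _⟩ | ⟨_, _, hs, _⟩ | ⟨_, _, hs, _, _⟩)
      · exact h1 hs
      · exact h2 hs
      · exact h1 (hA ▸ hs)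
      · exact h2 (hB ▸ hs)
    · rintro (⟨_, _, hs, rfl⟩ | ⟨_, _, _, hs, rfl⟩ | ⟨_, _, hs, rfl⟩ | ⟨_, _, hs, _, rfl⟩)
      · exact h1 (Finset.subset_erase.2 ⟨hs, v1_notMem_P1⟩)
      · exact h2 (Finset.subset_erase.2 ⟨hs, v2_notMem_P2⟩)
      · exact h1 (Finset.subset_erase.2 ⟨hA ▸ hs, v1_notMem_P1⟩)
      · exact h2 (Finset.subset_erase.2 ⟨hB ▸ hs, v2_notMem_P2⟩)

end Aux

/-- if `A ∩ B = ∅`, the `M`-critical vertices form a simplicial complex,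
namely `{T : T ∩ P₁ ≠ P₁ ∧ T ∩ P₂ ≠ P₂}`, whose facets are exactly the sets
`[n+2] ∖ {x, y}` with `x ∈ P₁`, `y ∈ P₂`. -/
theorem stmt14 (n : ℕ) (a b e : Fin n → ℕ) (hab : ∀ i, 0 < a i + b i)
    (he : ∀ i, max (a i) (b i) < e i)
    (hAB : setA a ∩ setB b = ∅) :
    (∀ T T' : Finset (Fin 2 ⊕ Fin n), critical a b T → T' ⊆ T → critical a b T') ∧
    (∀ T : Finset (Fin 2 ⊕ Fin n),
      critical a b T ↔ ¬ P1 a b ⊆ T ∧ ¬ P2 a b ⊆ T) ∧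
    (∀ T : Finset (Fin 2 ⊕ Fin n),
      (critical a b T ∧ ∀ T', critical a b T' → T ⊆ T' → T' = T) ↔
      ∃ x ∈ P1 a b, ∃ y ∈ P2 a b, T = Finset.univ \ {x, y}) := by
  have hi : ∀ i, ¬ (0 < a i ∧ 0 < b i) := by
    intro i ⟨ha, hb⟩
    have : Sum.inr i ∈ setA a ∩ setB b := by
      simp [setA, setB, ha, hb]
    rw [hAB] at this
    exact absurd this (Finset.notMem_empty _)
  have hA : setA a = P1 a b := by
    ext x
    rcases x with j | i
    · simp [setA, P1]
    · simp only [setA, P1, Finset.mem_image, Finset.mem_filter, Finset.mem_univ, true_and,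
        Sum.inr.injEq]
      constructor
      · rintro ⟨k, hk, rfl⟩
        refine ⟨k, ?_, rfl⟩
        have := hi k
        omega
      · rintro ⟨k, hk, rfl⟩
        exact ⟨k, by omega, rfl⟩
  have hB : setB b = P2 a b := by
    ext x
    rcases x with j | i
    · simp [setB, P2]
    · simp only [setB, P2, Finset.mem_image, Finset.mem_filter, Finset.mem_univ, true_and,
        Sum.inr.injEq]
      constructor
      · rintro ⟨k, hk, rfl⟩
        refine ⟨k, ?_, rfl⟩
        have := hi k
        omega
      · rintro ⟨k, hk, rfl⟩
        exact ⟨k, by omega, rfl⟩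
  refine ⟨?_, crit_iff hA hB, ?_⟩
  · intro T T' hT hsub
    rw [crit_iff hA hB] at hT ⊢
    exact ⟨fun h => hT.1 (h.trans hsub), fun h => hT.2 (h.trans hsub)⟩
  · intro T
    constructor
    · rintro ⟨hc, hmax⟩
      rw [crit_iff hA hB] at hc
      obtain ⟨x, hx, hxT⟩ := Finset.not_subset.1 hc.1
      obtain ⟨y, hy, hyT⟩ := Finset.not_subset.1 hc.2
      refine ⟨x, hx, y, hy, ?_⟩
      have hScrit : critical a b (Finset.univ \ {x, y}) := by
        rw [crit_iff hA hB]
        constructor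
        · intro h
          have := h hx
          simp at this
        · intro h
          have := h hy
          simp at this
      have hTS : T ⊆ Finset.univ \ {x, y} := by
        intro z hz
        simp only [Finset.mem_sdiff, Finset.mem_univ, true_and, Finset.mem_insert,
          Finset.mem_singleton]
        push_neg
        exact ⟨fun h => hxT (h ▸ hz), fun h => hyT (h ▸ hz)⟩
      exact (hmax _ hScrit hTS).symm
    · rintro ⟨x, hx, y, hy, rfl⟩
      have hxy : x ≠ y := fun h => P1_disj hx (h ▸ hy)
      have hxS : x ∉ Finset.univ \ ({x, y} : Finset (Fin 2 ⊕ Fin n)) := by simp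
      have hyS : y ∉ Finset.univ \ ({x, y} : Finset (Fin 2 ⊕ Fin n)) := by simp
      constructor
      · rw [crit_iff hA hB]
        exact ⟨fun h => hxS (h hx), fun h => hyS (h hy)⟩
      · intro T' hc' hsub
        rw [crit_iff hA hB] at hc'
        have hxT' : x ∉ T' := by
          intro hxT'
          refine hc'.1 (fun z hz => ?_)
          by_cases hzx : z = x
          · exact hzx ▸ hxT'
          · refine hsub ?_
            simp only [Finset.mem_sdiff, Finset.mem_univ, true_and, Finset.mem_insert,
              Finset.mem_singleton]
            push_neg
            exact ⟨hzx, fun h => P1_disj hz (h ▸ hy)⟩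
        have hyT' : y ∉ T' := by
          intro hyT'
          refine hc'.2 (fun z hz => ?_)
          by_cases hzy : z = y
          · exact hzy ▸ hyT'
          · refine hsub ?_
            simp only [Finset.mem_sdiff, Finset.mem_univ, true_and, Finset.mem_insert,
              Finset.mem_singleton]
            push_neg
            exact ⟨fun h => P1_disj hx (h ▸ hz), hzy⟩
        refine Finset.Subset.antisymm (fun z hz => ?_) hsub
        simp only [Finset.mem_sdiff, Finset.mem_univ, true_and, Finset.mem_insert,
          Finset.mem_singleton]
        push_neg
        exact ⟨fun h => hxT' (h ▸ hz), fun h => hyT' (h ▸ hz)⟩
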